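/- arXiv:1111.0775 — 2 statements merged into one kernel-verified Lean document; each statement's English description precedes it below -/
import Mathlib

section
/- For any k > 0, the class of k-locally testable groups is closed under taking finite direct products: if G and H are groups each admitting a finite symmetric generating set whose language of geodesic words is k-locally testable, then G × H admits a finite symmetric generating set whose language of geodesic words is k-locally testable. -/
/-- `pre_{k-1}`, `suf_{k-1}` and `sub_k` agree: the equivalence `∼_k` on words. -/
def SimK {A : Type*} (k : ℕ) (u v : List A) : Prop :=
  u.take (k - 1) = v.take (k - 1) ∧
  u.drop (u.length - (k - 1)) = v.drop (v.length - (k - 1)) ∧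
  ∀ s : List A, s.length = k → (s <:+: u ↔ s <:+: v)

/-- A language `L` is `k`-locally testable if membership is invariant under `∼_k`. -/
def LocallyTestable {A : Type*} (k : ℕ) (L : Set (List A)) : Prop :=
  ∀ u v : List A, SimK k u v → (u ∈ L ↔ v ∈ L)

/-- The syntactic congruence of a language: `u ∼_L v` iff `sut ∈ L ↔ svt ∈ L` for all `s, t`. -/
def SynCong {A : Type*} (L : Set (List A)) (u v : List A) : Prop :=
  ∀ s t : List A, s ++ u ++ t ∈ L ↔ s ++ v ++ t ∈ L

/-- The element of `G` represented by a word over the generating set `X`. -/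
def wordProd {G : Type*} [Group G] {X : Set G} (w : List X) : G :=
  (w.map Subtype.val).prod

/-- A word over `X` is geodesic if no word representing the same element is shorter. -/
def IsGeodesic {G : Type*} [Group G] (X : Set G) (w : List X) : Prop :=
  ∀ v : List X, wordProd v = wordProd w → w.length ≤ v.length

/-- The language of all geodesic words over `X`. -/
def Geo {G : Type*} [Group G] (X : Set G) : Set (List X) :=
  {w | IsGeodesic X w}

/-- The `j`-th power of a word in the free monoid (concatenation of `j` copies). -/
def listPow {A : Type*} (w : List A) : ℕ → List A
  | 0 => []
  | n + 1 => w ++ listPow w n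


/-!
Take `Z = (X ∪ {1}) × (Y ∪ {1})`. Padding the shorter of two words with `1`s shows that the
`Z`-length of `(g, h)` is the maximum of the lengths of `g` and `h`, so a word over `Z` is geodesic
iff one of its two coordinate projections is. Projecting letters preserves `∼_k`, so it remains to
see that adjoining `1` preserves local testability: a geodesic never contains the letter `1`, and
for `k > 0` two `∼_k`-equivalent words use the same letters.
-/

lemma List.exists_infix_length_eq_of_mem {A : Type*} {k : ℕ} {u : List A} {a : A}
    (hk : 0 < k) (hku : k ≤ u.length) (ha : a ∈ u) :
    ∃ s : List A, s.length = k ∧ s <:+: u ∧ a ∈ s := by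
  obtain ⟨i, hi, rfl⟩ := List.getElem_of_mem ha
  set j := min i (u.length - k)
  refine ⟨(u.drop j).take k, by simp only [List.length_take, List.length_drop]; omega,
    (List.take_prefix _ _).isInfix.trans (List.drop_suffix _ _).isInfix, ?_⟩
  have hij : i - j < ((u.drop j).take k).length := by
    simp only [List.length_take, List.length_drop]; omega
  convert List.getElem_mem hij using 1
  simp only [List.getElem_take, List.getElem_drop]
  congr 1
  omega

namespace SimK

variable {A B : Type*} {k : ℕ} {u v : List A}

lemma symm (h : SimK k u v) : SimK k v u :=
  ⟨h.1.symm, h.2.1.symm, fun s hs => (h.2.2 s hs).symm⟩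

lemma map (f : A → B) (h : SimK k u v) : SimK k (u.map f) (v.map f) := by
  obtain ⟨hpre, hsuf, hsub⟩ := h
  have key : ∀ {u v : List A}, (∀ s : List A, s.length = k → s <:+: u → s <:+: v) →
      ∀ s : List B, s.length = k → s <:+: u.map f → s <:+: v.map f := by
    intro u v huv s hs hsu
    obtain ⟨t, htu, rfl⟩ := List.infix_map_iff.mp hsu
    exact (huv t (by simpa using hs) htu).map f
  refine ⟨?_, ?_, fun s hs => ⟨key (fun t ht => (hsub t ht).mp) s hs,
    key (fun t ht => (hsub t ht).mpr) s hs⟩⟩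
  · rw [← List.map_take, ← List.map_take, hpre]
  · rw [List.length_map, List.length_map, ← List.map_drop, ← List.map_drop, hsuf]

lemma of_map {f : A → B} (hf : Function.Injective f) (h : SimK k (u.map f) (v.map f)) :
    SimK k u v := by
  obtain ⟨hpre, hsuf, hsub⟩ := h
  have hmap : Function.Injective (List.map f) := List.map_injective_iff.mpr hf
  have key : ∀ {u v : List A},
      (∀ s : List B, s.length = k → s <:+: u.map f → s <:+: v.map f) →
      ∀ s : List A, s.length = k → s <:+: u → s <:+: v := by
    intro u v huv s hs hsu
    obtain ⟨t, htv, hts⟩ := List.infix_map_iff.mp (huv _ (by simpa using hs) (hsu.map f))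
    rwa [hmap hts]
  refine ⟨hmap ?_, hmap ?_, fun s hs => ⟨key (fun t ht => (hsub t ht).mp) s hs,
    key (fun t ht => (hsub t ht).mpr) s hs⟩⟩
  · rwa [List.map_take, List.map_take]
  · simpa only [List.map_drop, List.length_map] using hsuf

lemma subset (hk : 0 < k) (h : SimK k u v) : u ⊆ v := by
  intro a ha
  rcases lt_or_ge u.length k with hu | hu
  · rw [← List.take_of_length_le (show u.length ≤ k - 1 by omega), h.1] at ha
    exact List.mem_of_mem_take ha
  · obtain ⟨s, hs, hsu, has⟩ := List.exists_infix_length_eq_of_mem hk hu ha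
    exact ((h.2.2 s hs).mp hsu).subset has

end SimK

lemma LocallyTestable.image_map {A B : Type*} {k : ℕ} {L : Set (List A)} (hk : 0 < k)
    (hL : LocallyTestable k L) {f : A → B} (hf : Function.Injective f) :
    LocallyTestable k (List.map f '' L) := by
  suffices h : ∀ u v, SimK k u v → u ∈ List.map f '' L → v ∈ List.map f '' L from
    fun u v huv => ⟨h u v huv, h v u huv.symm⟩
  rintro _ v huv ⟨u, hu, rfl⟩
  have : CanLift B A f (· ∈ Set.range f) := ⟨fun _ => id⟩
  lift v to List A using fun b hb =>
    (List.mem_map.mp (huv.symm.subset hk hb)).imp fun _ => And.right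
  exact ⟨v, (hL u v (SimK.of_map hf huv)).mp hu, rfl⟩

section Words

variable {G H : Type*} [Group G] [Group H] {X : Set G} {Y : Set H}

@[simp]
lemma wordProd_cons (x : X) (w : List X) : wordProd (x :: w) = x * wordProd w :=
  List.prod_cons

lemma wordProd_map (φ : G →* H) {f : X → Y} (hf : ∀ x, (f x : H) = φ x) (w : List X) :
    wordProd (w.map f) = φ (wordProd w) := by
  induction w with
  | nil => exact (map_one φ).symm
  | cons x w ih => simp [ih, hf]

lemma IsGeodesic.of_map (φ : G →* H) {f : X → Y} (hf : ∀ x, (f x : H) = φ x) {w : List X}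
    (hw : IsGeodesic Y (w.map f)) : IsGeodesic X w := fun v hv => by
  simpa using hw (v.map f) (by rw [wordProd_map φ hf, wordProd_map φ hf, hv])

lemma exists_wordProd_eq_of_insert_one (v : List (insert 1 X : Set G)) :
    ∃ u : List X, wordProd u = wordProd v ∧ u.length ≤ v.length := by
  induction v with
  | nil => exact ⟨[], rfl, le_rfl⟩
  | cons z v ih =>
    obtain ⟨u, hu, hlen⟩ := ih
    obtain ⟨z, hz1 | hzX⟩ := z
    · exact ⟨u, by simp [hu, hz1], by simp only [List.length_cons]; omega⟩
    · exact ⟨⟨z, hzX⟩ :: u, by simp [hu], by simpa⟩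

lemma IsGeodesic.forall_ne_one {w : List X} (hw : IsGeodesic X w) : ∀ x ∈ w, (x : G) ≠ 1 := by
  intro x hx h1
  obtain ⟨p, q, rfl⟩ := List.append_of_mem hx
  have := hw (p ++ q) (by simp [wordProd, h1])
  simp at this

lemma geo_insert_one (X : Set G) :
    Geo (insert 1 X) = List.map (Set.inclusion (Set.subset_insert 1 X)) '' Geo X := by
  ext w
  constructor
  · intro hw
    have : CanLift (insert 1 X : Set G) X (Set.inclusion (Set.subset_insert 1 X))
      (fun z => (z : G) ≠ 1) := ⟨fun z hz => ⟨⟨z, z.2.resolve_left hz⟩, rfl⟩⟩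
    lift w to List X using hw.forall_ne_one
    exact ⟨w, hw.of_map (MonoidHom.id G) (f := Set.inclusion _) fun _ => rfl, rfl⟩
  · rintro ⟨w, hw, rfl⟩ v hv
    obtain ⟨u, hu, hlen⟩ := exists_wordProd_eq_of_insert_one v
    rw [wordProd_map (MonoidHom.id G) (f := Set.inclusion _) fun _ => rfl] at hv
    simpa using (hw u (hu.trans hv)).trans hlen

end Words

section Product

variable {G H : Type*} [Group G] [Group H] {S : Set G} {T : Set H}

def letterFst (z : S ×ˢ T) : S := ⟨z.1.1, z.2.1⟩

def letterSnd (z : S ×ˢ T) : T := ⟨z.1.2, z.2.2⟩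

lemma wordProd_map_letterFst (w : List (S ×ˢ T)) :
    wordProd (w.map letterFst) = (wordProd w).1 :=
  wordProd_map (MonoidHom.fst G H) (fun _ => rfl) w

lemma wordProd_map_letterSnd (w : List (S ×ˢ T)) :
    wordProd (w.map letterSnd) = (wordProd w).2 :=
  wordProd_map (MonoidHom.snd G H) (fun _ => rfl) w

lemma exists_wordProd_eq_prod (hS : 1 ∈ S) (hT : 1 ∈ T) :
    ∀ (a : List S) (b : List T), ∃ c : List (S ×ˢ T),
      c.length = max a.length b.length ∧ wordProd c = (wordProd a, wordProd b)
  | [], [] => ⟨[], rfl, rfl⟩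
  | x :: a, [] =>
    have ⟨c, hl, hc⟩ := exists_wordProd_eq_prod hS hT a []
    ⟨⟨(x, 1), x.2, hT⟩ :: c, by simp_all, by simp [hc]⟩
  | [], y :: b =>
    have ⟨c, hl, hc⟩ := exists_wordProd_eq_prod hS hT [] b
    ⟨⟨(1, y), hS, y.2⟩ :: c, by simp_all, by simp [hc]⟩
  | x :: a, y :: b =>
    have ⟨c, hl, hc⟩ := exists_wordProd_eq_prod hS hT a b
    ⟨⟨(x, y), x.2, y.2⟩ :: c, by simp_all, by simp [hc]⟩

lemma geo_prod_iff (hS : 1 ∈ S) (hT : 1 ∈ T) (w : List (S ×ˢ T)) :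
    w ∈ Geo (S ×ˢ T) ↔ w.map letterFst ∈ Geo S ∨ w.map letterSnd ∈ Geo T := by
  constructor
  · intro hw
    by_contra! h
    obtain ⟨⟨a, ha, hal⟩, ⟨b, hb, hbl⟩⟩ :
        (∃ a, wordProd a = (wordProd w).1 ∧ a.length < w.length) ∧
          (∃ b, wordProd b = (wordProd w).2 ∧ b.length < w.length) := by
      simpa [Geo, IsGeodesic, wordProd_map_letterFst, wordProd_map_letterSnd] using h
    obtain ⟨c, hcl, hc⟩ := exists_wordProd_eq_prod hS hT a b
    have := hw c (by rw [hc, ha, hb])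
    omega
  · rintro (h | h)
    · exact h.of_map (MonoidHom.fst G H) fun _ => rfl
    · exact h.of_map (MonoidHom.snd G H) fun _ => rfl

end Product

lemma locallyTestable_geo_insert_one {G : Type*} [Group G] {X : Set G} {k : ℕ} (hk : 0 < k)
    (hX : LocallyTestable k (Geo X)) : LocallyTestable k (Geo (insert 1 X)) := by
  rw [geo_insert_one]
  exact hX.image_map hk (Set.inclusion_injective _)

lemma forall_inv_mem_insert_one {G : Type*} [Group G] {X : Set G} (hX : ∀ x ∈ X, x⁻¹ ∈ X) :
    ∀ x ∈ insert 1 X, x⁻¹ ∈ insert 1 X := by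
  rintro x (rfl | hx)
  · simp
  · exact Or.inr (hX x hx)

/-- The class of `k`-locally testable groups is closed under finite direct products. -/
theorem stmt4 (k : ℕ) (hk : 0 < k) {G H : Type*} [Group G] [Group H]
    (hG : ∃ X : Set G, X.Finite ∧ (∀ x ∈ X, x⁻¹ ∈ X) ∧ Subgroup.closure X = ⊤ ∧
      LocallyTestable k (Geo X))
    (hH : ∃ Y : Set H, Y.Finite ∧ (∀ y ∈ Y, y⁻¹ ∈ Y) ∧ Subgroup.closure Y = ⊤ ∧
      LocallyTestable k (Geo Y)) :
    ∃ Z : Set (G × H), Z.Finite ∧ (∀ z ∈ Z, z⁻¹ ∈ Z) ∧ Subgroup.closure Z = ⊤ ∧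
      LocallyTestable k (Geo Z) := by
  obtain ⟨X, hXfin, hXinv, hXgen, hXlt⟩ := hG
  obtain ⟨Y, hYfin, hYinv, hYgen, hYlt⟩ := hH
  have hX1 : (1 : G) ∈ insert 1 X := Set.mem_insert 1 X
  have hY1 : (1 : H) ∈ insert 1 Y := Set.mem_insert 1 Y
  refine ⟨insert 1 X ×ˢ insert 1 Y, (hXfin.insert 1).prod (hYfin.insert 1), fun z hz =>
    ⟨forall_inv_mem_insert_one hXinv _ hz.1, forall_inv_mem_insert_one hYinv _ hz.2⟩,
    ?_, fun u v huv => ?_⟩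
  · rw [Subgroup.closure_prod hX1 hY1, Subgroup.closure_insert_one, Subgroup.closure_insert_one,
      hXgen, hYgen, Subgroup.top_prod_top]
  · rw [geo_prod_iff hX1 hY1, geo_prod_iff hX1 hY1]
    exact or_congr (locallyTestable_geo_insert_one hk hXlt _ _ (huv.map _))
      (locallyTestable_geo_insert_one hk hYlt _ _ (huv.map _))
end

section
/- If G is a locally testable group (i.e. Geo(G,X) is k-locally testable for some finite symmetric generating set X of G and some k ≥ 1), then G has only finitely many conjugacy classes of elements of finite order. -/
/-!
Replace a torsion element by a conjugate `h`, with `h ^ m = 1` and `m > 0`, represented by a word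
`w` of minimal length `ℓ` among all words representing conjugates of `h`. Every cyclic rotation
`u` of `w` represents a conjugate of `h`, hence is geodesic, whereas `u ^ (m + 1)` represents the
same element as `u` and is longer. If `ℓ > (k - 1) * |X| ^ k`, a pigeonhole count finds a rotation
`u` in which every cyclic `k`-subword of `w` already occurs as a subword of `u`; then
`u ∼_k u ^ (m + 1)`, contradicting local testability. Hence every torsion element is conjugate to
one of the finitely many elements of word length at most `(k - 1) * |X| ^ k`.
-/

open Function

theorem exists_lt_forall_add_mod_ne {k ℓ : ℕ} (S : Finset ℕ) (h : (k - 1) * S.card < ℓ) :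
    ∃ i < ℓ, ∀ p ∈ S, ∀ e, 1 ≤ e → e < k → (p + e) % ℓ ≠ i := by
  have hcard : ((S ×ˢ Finset.Ico 1 k).image fun q => (q.1 + q.2) % ℓ).card
      < (Finset.range ℓ).card :=
    calc _ ≤ (S ×ˢ Finset.Ico 1 k).card := Finset.card_image_le
      _ = (k - 1) * S.card := by rw [Finset.card_product, Nat.card_Ico, Nat.mul_comm]
      _ < _ := by rwa [Finset.card_range]
  obtain ⟨i, hi, hnot⟩ := Finset.exists_mem_notMem_of_card_lt_card hcard
  refine ⟨i, Finset.mem_range.mp hi, fun p hp e he1 hek hpe => hnot ?_⟩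
  exact Finset.mem_image.mpr ⟨(p, e), Finset.mem_product.mpr ⟨hp, Finset.mem_Ico.mpr ⟨he1, hek⟩⟩, hpe⟩

section Window

variable {α : Type*}

def window (f : ℕ → α) (i n : ℕ) : List α :=
  (List.range n).map fun r => f (i + r)

variable (f : ℕ → α)

@[simp]
theorem length_window (i n : ℕ) : (window f i n).length = n := by
  simp [window]

theorem window_add (i a b : ℕ) : window f i (a + b) = window f i a ++ window f (i + a) b := by
  simp only [window, List.range_add, List.map_append, List.map_map]
  congr 1
  exact List.map_congr_left fun r _ => by simp [Nat.add_assoc]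

theorem window_one (i : ℕ) : window f i 1 = [f i] := by
  simp [window]

theorem window_congr {a b n : ℕ} (h : ∀ r < n, f (a + r) = f (b + r)) :
    window f a n = window f b n :=
  List.map_congr_left fun r hr => h r (List.mem_range.mp hr)

theorem take_window (i : ℕ) {a b : ℕ} (h : a ≤ b) : (window f i b).take a = window f i a := by
  obtain ⟨c, rfl⟩ := Nat.exists_eq_add_of_le h
  rw [window_add]
  exact List.take_left' (length_window f i a)

theorem drop_window (i : ℕ) {a b : ℕ} (h : a ≤ b) :
    (window f i b).drop a = window f (i + a) (b - a) := by
  obtain ⟨c, rfl⟩ := Nat.exists_eq_add_of_le h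
  rw [window_add, Nat.add_sub_cancel_left]
  exact List.drop_left' (length_window f i a)

theorem infix_window_iff {s : List α} {i n : ℕ} :
    s <:+: window f i n ↔ ∃ j, j + s.length ≤ n ∧ s = window f (i + j) s.length := by
  constructor
  · rintro ⟨p, q, hpq⟩
    have hlen : p.length + (s.length + q.length) = n := by
      simpa using congrArg List.length hpq
    refine ⟨p.length, by omega, ?_⟩
    calc s = ((p ++ s ++ q).drop p.length).take s.length := by simp
      _ = window f (i + p.length) s.length := by
        rw [hpq, drop_window f i (by omega), take_window f _ (by omega)]
  · rintro ⟨j, hj, hs⟩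
    obtain ⟨c, rfl⟩ := Nat.exists_eq_add_of_le hj
    rw [window_add, window_add, ← hs]
    exact ⟨window f i j, _, rfl⟩

variable {f}

theorem Function.Periodic.window {ℓ : ℕ} (hf : Periodic f ℓ) (n : ℕ) :
    Periodic (fun i => window f i n) ℓ := fun i =>
  window_congr f fun r _ => by simpa [Nat.add_right_comm] using hf (i + r)

theorem exists_rotation_contains_all_windows [Fintype α] {f : ℕ → α} {k ℓ : ℕ}
    (hf : Periodic f ℓ) (hℓ : (k - 1) * Fintype.card (Fin k → α) < ℓ) :
    ∃ i, ∀ j, ∃ j', j' + k ≤ ℓ ∧ window f (i + j') k = window f (i + j) k := by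
  -- Fix one occurrence `p` of each `k`-window: a start `i` can only fail if it lies among the
  -- `k - 1` positions right after some `p`, and there are too few of those to cover `ℓ`.
  let φ : ℕ → Fin k → α := fun p r => f (p + r)
  have hφ : ∀ {a b}, φ a = φ b → window f a k = window f b k := fun hab =>
    window_congr f fun r hr => congrFun hab ⟨r, hr⟩
  obtain ⟨i, hiℓ, hi⟩ := exists_lt_forall_add_mod_ne (Finset.univ.image (invFun φ))
    (lt_of_le_of_lt (Nat.mul_le_mul_left _ Finset.card_image_le) hℓ)
  refine ⟨i, fun j => ?_⟩
  set p := invFun φ (φ (i + j))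
  have hp : window f p k = window f (i + j) k := hφ (invFun_eq ⟨_, rfl⟩)
  obtain ⟨q, d, hd, hpqd⟩ : ∃ q d, d < ℓ ∧ p + ℓ = i + d + q * ℓ :=
    ⟨(p + ℓ - i) / ℓ, (p + ℓ - i) % ℓ, Nat.mod_lt _ (by omega), by
      have := Nat.mod_add_div' (p + ℓ - i) ℓ; omega⟩
  have hwin : window f (i + d) k = window f p k := by
    have hq : window f (i + d + q * ℓ) k = window f (i + d) k := (hf.window k).nat_mul q _
    have hperiod : window f (p + ℓ) k = window f p k := hf.window k p
    rw [← hq, ← hpqd, hperiod]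
  by_cases hdk : d + k ≤ ℓ
  · exact ⟨d, hdk, hwin.trans hp⟩
  · refine absurd ?_ (hi p (Finset.mem_image_of_mem _ (Finset.mem_univ _)) (ℓ - d) (by omega)
      (by omega))
    rw [show p + (ℓ - d) = i + q * ℓ by omega, Nat.add_mul_mod_self_right,
      Nat.mod_eq_of_lt hiℓ]

theorem simK_window_add_mul {f : ℕ → α} {k ℓ i : ℕ} (hf : Periodic f ℓ)
    (hi : ∀ j, ∃ j', j' + k ≤ ℓ ∧ window f (i + j') k = window f (i + j) k) (m : ℕ) :
    SimK k (window f i ℓ) (window f i (ℓ + m * ℓ)) := by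
  have hkℓ : k ≤ ℓ := by
    obtain ⟨j', hj', -⟩ := hi 0
    omega
  refine ⟨?_, ?_, fun s hs => ⟨fun hsu => hsu.trans ?_, fun hsv => ?_⟩⟩
  · rw [take_window f i (by omega), take_window f i (by omega)]
  · have hperiod : window f (i + (ℓ - (k - 1)) + m * ℓ) (k - 1)
        = window f (i + (ℓ - (k - 1))) (k - 1) := (hf.window (k - 1)).nat_mul m _
    rw [length_window, length_window, drop_window f i (by omega), drop_window f i (by omega),
      Nat.sub_sub_self (by omega), Nat.sub_sub_self (by omega), ← hperiod]
    congr 1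
    omega
  · rw [window_add]
    exact (List.prefix_append _ _).isInfix
  · obtain ⟨j, -, hsj⟩ := (infix_window_iff f).mp hsv
    obtain ⟨j', hj', hjj'⟩ := hi j
    rw [hs] at hsj
    exact (infix_window_iff f).mpr ⟨j', by omega, by rw [hs, hsj, hjj']⟩

end Window

namespace List

variable {α : Type*}

/-- The rotations of `w` and their powers are the windows of this sequence. -/
def cyclicSeq (w : List α) (hw : 0 < w.length) (n : ℕ) : α :=
  w[n % w.length]'(Nat.mod_lt n hw)

variable (w : List α) (hw : 0 < w.length)

theorem periodic_cyclicSeq : Periodic (w.cyclicSeq hw) w.length := fun n => by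
  simp [cyclicSeq]

theorem window_cyclicSeq_zero : window (w.cyclicSeq hw) 0 w.length = w :=
  List.ext_getElem (by simp) fun n _ hn => by simp [window, cyclicSeq, Nat.mod_eq_of_lt hn]

end List

section Words

variable {G : Type*} [Group G] {X : Set G}

theorem wordProd_append (u v : List X) : wordProd (u ++ v) = wordProd u * wordProd v := by
  simp [wordProd]

theorem wordProd_singleton (x : X) : wordProd [x] = x := by
  simp [wordProd]

theorem exists_wordProd_eq (hsym : ∀ x ∈ X, x⁻¹ ∈ X) (hgen : Subgroup.closure X = ⊤) (g : G) :
    ∃ w : List X, wordProd w = g := by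
  have hg : g ∈ (Subgroup.closure X).toSubmonoid := by simp [hgen]
  rw [Subgroup.closure_toSubmonoid] at hg
  obtain ⟨l, hlX, rfl⟩ := Submonoid.exists_list_of_mem_closure hg
  lift l to List X using fun x hx => (hlX x hx).elim id fun hx' => by simpa using hsym _ hx'
  exact ⟨l, rfl⟩

theorem exists_shortest_word_isConj (hsym : ∀ x ∈ X, x⁻¹ ∈ X) (hgen : Subgroup.closure X = ⊤)
    (g : G) : ∃ w : List X, IsConj g (wordProd w) ∧
      ∀ v : List X, IsConj g (wordProd v) → w.length ≤ v.length := by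
  classical
  have hex : ∃ n, ∃ w : List X, w.length = n ∧ IsConj g (wordProd w) := by
    obtain ⟨w, hw⟩ := exists_wordProd_eq hsym hgen g
    exact ⟨_, w, rfl, hw ▸ IsConj.refl g⟩
  obtain ⟨w, hlen, hw⟩ := Nat.find_spec hex
  exact ⟨w, hw, fun v hv => hlen ▸ Nat.find_min' hex ⟨v, rfl, hv⟩⟩

variable {f : ℕ → X} {ℓ : ℕ}

theorem isConj_wordProd_window (hf : Periodic f ℓ) (i : ℕ) :
    IsConj (wordProd (window f 0 ℓ)) (wordProd (window f i ℓ)) := by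
  induction i with
  | zero => rfl
  | succ i ih =>
    refine ih.trans (isConj_iff.mpr ⟨(f i : G)⁻¹, ?_⟩)
    cases ℓ with
    | zero => simp [window, wordProd]
    | succ n =>
      have hrot : window f (i + 1) (n + 1) = window f (i + 1) n ++ [f i] := by
        rw [window_add, window_one, Nat.add_assoc, Nat.add_comm 1 n, hf]
      rw [Nat.add_comm n 1, window_add, window_one, ← Nat.add_comm n 1, hrot,
        wordProd_append, wordProd_append, wordProd_singleton]
      group

theorem wordProd_window_mul (hf : Periodic f ℓ) (i m : ℕ) :
    wordProd (window f i (m * ℓ)) = wordProd (window f i ℓ) ^ m := by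
  induction m with
  | zero => simp [window, wordProd]
  | succ m ih =>
    have hshift : window f (i + ℓ) (m * ℓ) = window f i (m * ℓ) := hf.window _ i
    rw [Nat.succ_mul, Nat.add_comm, window_add, wordProd_append, hshift, ih, pow_succ']

end Words

theorem length_le_of_isOfFinOrder_of_forall_isConj {G : Type*} [Group G] {X : Set G} [Fintype X]
    {k : ℕ} (hlt : LocallyTestable k (Geo X)) {w : List X} (hw : IsOfFinOrder (wordProd w))
    (hmin : ∀ v : List X, IsConj (wordProd w) (wordProd v) → w.length ≤ v.length) :
    w.length ≤ (k - 1) * Fintype.card (Fin k → X) := by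
  by_contra! hlong
  have hℓ : 0 < w.length := lt_of_le_of_lt (Nat.zero_le _) hlong
  set f := w.cyclicSeq hℓ
  have hf : Periodic f w.length := w.periodic_cyclicSeq hℓ
  obtain ⟨i, hi⟩ := exists_rotation_contains_all_windows hf hlong
  obtain ⟨m, hm, hpow⟩ := isOfFinOrder_iff_pow_eq_one.mp hw
  set u := window f i w.length
  have hconj : IsConj (wordProd w) (wordProd u) := by
    simpa only [f, w.window_cyclicSeq_zero hℓ] using isConj_wordProd_window hf i
  have hu : u ∈ Geo X := fun v hv => by
    simpa [u] using hmin v (hv ▸ hconj)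
  have hupow : wordProd u ^ m = 1 := isConj_one_right.mp (hpow ▸ hconj.pow m)
  have hshift : window f (i + w.length) (m * w.length) = window f i (m * w.length) :=
    hf.window _ i
  have hlong_geo := (hlt _ _ (simK_window_add_mul hf hi m)).mp hu u (by
    rw [window_add, wordProd_append, hshift, wordProd_window_mul hf, hupow, mul_one])
  simp only [length_window, u] at hlong_geo
  have := Nat.mul_pos hm hℓ
  omega

theorem stmt8_general {G : Type*} [Group G] (X : Set G)
    (hfin : X.Finite) (hsym : ∀ x ∈ X, x⁻¹ ∈ X) (hgen : Subgroup.closure X = ⊤)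
    (k : ℕ) (hlt : LocallyTestable k (Geo X)) :
    ∃ T : Set G, T.Finite ∧ ∀ g : G, IsOfFinOrder g → ∃ t ∈ T, IsConj t g := by
  have := hfin.fintype
  refine ⟨wordProd '' {v : List X | v.length ≤ (k - 1) * Fintype.card (Fin k → X)},
    (List.finite_length_le _ _).image _, fun g hg => ?_⟩
  obtain ⟨w, hgw, hmin⟩ := exists_shortest_word_isConj hsym hgen g
  exact ⟨wordProd w, ⟨w, length_le_of_isOfFinOrder_of_forall_isConj hlt (hgw.isOfFinOrder hg)
    fun v hv => hmin v (hgw.trans hv), rfl⟩, hgw.symm⟩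

/-- A locally testable group has finitely many conjugacy classes of torsion elements. -/
theorem stmt8 {G : Type*} [Group G] (X : Set G)
    (hfin : X.Finite) (hsym : ∀ x ∈ X, x⁻¹ ∈ X) (hgen : Subgroup.closure X = ⊤)
    (k : ℕ) (hk : 1 ≤ k) (hlt : LocallyTestable k (Geo X)) :
    ∃ T : Set G, T.Finite ∧ ∀ g : G, IsOfFinOrder g → ∃ t ∈ T, IsConj t g :=
  stmt8_general X hfin hsym hgen k hlt
end
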